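/- Let G = (V,E) be a graph with n vertices and let C ⊆ V be a vertex cover of G. Define w ∈ ℝ^{n+1} by w[i] = 3 if v_i ∈ C, w[i] = -1 if v_i ∉ C (for i ≤ n), w[n+1] = -1, and b = 0. Then: (a) sign(wᵀ x_t + b) = -1 for the test point x_t = e_{n+1}; (b) sign(wᵀ x_{i,j} + b) = +1 for every edge point x_{i,j}; (c) sign(wᵀ e_i + b) = +1 iff v_i ∈ C. Hence flipping exactly the labels of the vertex points corresponding to C yields a poisoned dataset perfectly realized by this linear classifier that also classifies x_t as -1. -/

import Mathlib

open Finset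

noncomputable def sgn (t : ℝ) : ℝ := if 0 ≤ t then 1 else -1

noncomputable def classify {d : ℕ} (w : Fin d → ℝ) (b : ℝ) (x : Fin d → ℝ) : ℝ :=
  sgn (∑ k, w k * x k + b)

open Classical in
noncomputable def flips {ι : Type*} [Fintype ι] (y y' : ι → ℝ) : ℕ :=
  (Finset.univ.filter fun i => y' i ≠ y i).card

noncomputable def robustness {d : ℕ} {ι : Type*} [Fintype ι]
    (x : ι → Fin d → ℝ) (y : ι → ℝ) (xt : Fin d → ℝ) (yt : ℝ) : ℕ :=
  sInf {k | ∃ y' : ι → ℝ, (∀ i, y' i = y i ∨ y' i = - y i) ∧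
    (∃ w b, (∀ i, classify w b (x i) = y' i) ∧ classify w b xt = yt) ∧
    flips y y' = k}

def vert {n : ℕ} (i : Fin n) : Fin (n+1) → ℝ := fun k => if k = i.castSucc then 1 else 0

def testPt (n : ℕ) : Fin (n+1) → ℝ := fun k => if k = Fin.last n then 1 else 0

def edgePt {n : ℕ} (i j : Fin n) : Fin (n+1) → ℝ :=
  fun k => if k = i.castSucc ∨ k = j.castSucc ∨ k = Fin.last n then 1 else 0

open Classical in
noncomputable def edgeVec {n : ℕ} (e : Sym2 (Fin n)) : Fin (n+1) → ℝ :=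
  fun k => if k = Fin.last n then 1 else if ∃ i : Fin n, i ∈ e ∧ k = i.castSucc then 1 else 0

theorem sgn_eq_one_iff {t : ℝ} : sgn t = 1 ↔ 0 ≤ t := by
  unfold sgn; split_ifs with h <;> norm_num [h]

theorem sgn_eq_neg_one_iff {t : ℝ} : sgn t = -1 ↔ t < 0 := by
  unfold sgn; split_ifs with h
  · norm_num [h]
  · simpa using h

section Encoding

variable {n : ℕ} (w : Fin (n+1) → ℝ)

theorem sum_mul_testPt : ∑ k, w k * testPt n k = w (Fin.last n) := by
  simp [testPt]

theorem sum_mul_vert (i : Fin n) : ∑ k, w k * vert i k = w i.castSucc := by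
  simp [vert]

theorem sum_mul_edgePt {i j : Fin n} (hij : i ≠ j) :
    ∑ k, w k * edgePt i j k = w i.castSucc + w j.castSucc + w (Fin.last n) := by
  have hsupp : univ.filter (fun k => k = i.castSucc ∨ k = j.castSucc ∨ k = Fin.last n) =
      {i.castSucc, j.castSucc, Fin.last n} := by
    ext k; simp
  simp only [edgePt, mul_ite, mul_one, mul_zero]
  rw [← sum_filter, hsupp, sum_insert, sum_insert, sum_singleton, add_assoc]
  · simp [Fin.castSucc_ne_last]
  · simp [hij, Fin.castSucc_ne_last]

end Encoding

section CoverWeight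

variable {n : ℕ} (C : Finset (Fin n))

noncomputable def coverWeight : Fin (n+1) → ℝ := fun k =>
  if h : k = Fin.last n then -1 else if k.castPred h ∈ C then 3 else -1

theorem coverWeight_last : coverWeight C (Fin.last n) = -1 := by
  simp [coverWeight]

theorem coverWeight_castSucc (i : Fin n) :
    coverWeight C i.castSucc = if i ∈ C then 3 else -1 := by
  simp only [coverWeight, Fin.castSucc_ne_last, dite_false, Fin.castPred_castSucc]
  -- the two sides differ only in the `Decidable (i ∈ C)` instance
  congr

theorem classify_coverWeight_testPt : classify (coverWeight C) 0 (testPt n) = -1 := by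
  rw [classify, sum_mul_testPt, coverWeight_last, sgn_eq_neg_one_iff]
  norm_num

theorem classify_coverWeight_edgePt {i j : Fin n} (hij : i ≠ j) (hcov : i ∈ C ∨ j ∈ C) :
    classify (coverWeight C) 0 (edgePt i j) = 1 := by
  rw [classify, sum_mul_edgePt _ hij, coverWeight_castSucc, coverWeight_castSucc,
    coverWeight_last, sgn_eq_one_iff]
  -- a covered endpoint contributes 3, outweighing the two other terms of weight -1
  rcases hcov with h | h <;> split_ifs <;> norm_num

theorem classify_coverWeight_vert_eq_one_iff (i : Fin n) :
    classify (coverWeight C) 0 (vert i) = 1 ↔ i ∈ C := by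
  rw [classify, sum_mul_vert, coverWeight_castSucc, sgn_eq_one_iff]
  split_ifs with h <;> norm_num [h]

end CoverWeight

theorem stmt1 {n : ℕ} (G : SimpleGraph (Fin n)) (C : Finset (Fin n))
    (hC : ∀ ⦃i j : Fin n⦄, G.Adj i j → i ∈ C ∨ j ∈ C) :
    let w : Fin (n+1) → ℝ := fun k =>
      if h : k = Fin.last n then -1 else if k.castPred h ∈ C then 3 else -1
    (classify w 0 (testPt n) = -1) ∧
    (∀ i j : Fin n, G.Adj i j → classify w 0 (edgePt i j) = 1) ∧
    (∀ i : Fin n, classify w 0 (vert i) = 1 ↔ i ∈ C) :=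
  ⟨classify_coverWeight_testPt C,
    fun _ _ hij => classify_coverWeight_edgePt C (G.ne_of_adj hij) (hC hij),
    classify_coverWeight_vert_eq_one_iff C⟩
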